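/- Let S be a finite nonempty set of points in the plane, D a point and d a real number with 0 < d and d ≤ dist(p, D) for every p ∈ S. For p ∈ S let p' := p + (d / dist(p, D)) • (D − p); that is, p' is the point at distance d from p on the segment from p to D. Suppose c is a point and r a real number such that dist(p, c) ≤ r for all p ∈ S. Then there exists a point c' such that dist(p', c') ≤ r for every p ∈ S. (Moving all points of a set a common distance d towards a point D, without overshooting, never increases the minimum enclosing radius.) -/

import Mathlib

/-!
Writing `v = x - D`, moving `x` a distance `d` towards `D` is `v ↦ v - P v`, where `P` is the
metric projection onto the closed ball of radius `d`; the centre `c` is moved by the same map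
(which sends points within `d` of `D` to `D`). The variational inequalities of a metric projection
make `P` firmly nonexpansive, hence `v ↦ v - P v` is `1`-Lipschitz and the moved centre is still
within `r` of every moved point.
-/

open RealInnerProductSpace

section

variable {E : Type*} [NormedAddCommGroup E] [InnerProductSpace ℝ E]

/-- `hx`, `hy` are the variational inequalities of a metric projection `x ↦ px` onto a convex set;
summing them gives firm nonexpansiveness `‖px - py‖² ≤ ⟪x - y, px - py⟫`. -/
theorem norm_sub_sub_sub_le_of_inner_le_zero {x y px py : E}
    (hx : ⟪x - px, py - px⟫ ≤ 0) (hy : ⟪y - py, px - py⟫ ≤ 0) :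
    ‖(x - px) - (y - py)‖ ≤ ‖x - y‖ := by
  have hfirm : ‖px - py‖ ^ 2 ≤ ⟪x - y, px - py⟫ := by
    have : ⟪x - px, py - px⟫ + ⟪y - py, px - py⟫ = ‖px - py‖ ^ 2 - ⟪x - y, px - py⟫ := by
      rw [← real_inner_self_eq_norm_sq, ← neg_sub px py, inner_neg_right]
      simp only [inner_sub_left]
      ring
    linarith
  have hexp : ‖(x - px) - (y - py)‖ ^ 2
      = ‖x - y‖ ^ 2 - 2 * ⟪x - y, px - py⟫ + ‖px - py‖ ^ 2 := by
    rw [show (x - px) - (y - py) = (x - y) - (px - py) by abel, norm_sub_sq_real]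
  refine (pow_le_pow_iff_left₀ (norm_nonneg _) (norm_nonneg _) two_ne_zero).mp ?_
  linarith [sq_nonneg ‖px - py‖]

/-- The metric projection onto `closedBall 0 d`, for `0 < d`. -/
noncomputable def projClosedBall (d : ℝ) (v : E) : E := (d / max ‖v‖ d) • v

theorem norm_projClosedBall_le {d : ℝ} (hd : 0 < d) (v : E) : ‖projClosedBall d v‖ ≤ d := by
  rw [projClosedBall, norm_smul, Real.norm_of_nonneg (by positivity), div_mul_eq_mul_div,
    div_le_iff₀ (by positivity)]
  exact mul_le_mul_of_nonneg_left (le_max_left _ _) hd.le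

theorem inner_sub_projClosedBall_le_zero {d : ℝ} (hd : 0 < d) (v : E) {w : E} (hw : ‖w‖ ≤ d) :
    ⟪v - projClosedBall d v, w - projClosedBall d v⟫ ≤ 0 := by
  rcases le_total ‖v‖ d with hvd | hdv
  · simp [projClosedBall, max_eq_right hvd, hd.ne']
  have hv : 0 < ‖v‖ := hd.trans_le hdv
  set t := d / ‖v‖
  have hproj : projClosedBall d v = t • v := by rw [projClosedBall, max_eq_left hdv]
  have ht : t ≤ 1 := (div_le_one hv).mpr hdv
  have htv : t * ‖v‖ ^ 2 = d * ‖v‖ := by rw [sq, ← mul_assoc, div_mul_cancel₀ d hv.ne']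
  have hvw : ⟪v, w⟫ ≤ ‖v‖ * d :=
    (real_inner_le_norm v w).trans (mul_le_mul_of_nonneg_left hw hv.le)
  calc ⟪v - projClosedBall d v, w - projClosedBall d v⟫
      = (1 - t) * (⟪v, w⟫ - t * ‖v‖ ^ 2) := by
        rw [hproj]
        simp only [inner_sub_left, inner_sub_right, real_inner_smul_left, real_inner_smul_right,
          real_inner_self_eq_norm_sq, norm_smul, mul_pow, Real.norm_eq_abs, sq_abs]
        ring
    _ ≤ 0 := mul_nonpos_of_nonneg_of_nonpos (sub_nonneg.mpr ht) (by linarith)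

theorem norm_sub_projClosedBall_sub_le {d : ℝ} (hd : 0 < d) (v w : E) :
    ‖(v - projClosedBall d v) - (w - projClosedBall d w)‖ ≤ ‖v - w‖ :=
  norm_sub_sub_sub_le_of_inner_le_zero
    (inner_sub_projClosedBall_le_zero hd v (norm_projClosedBall_le hd w))
    (inner_sub_projClosedBall_le_zero hd w (norm_projClosedBall_le hd v))

end

theorem shrink_towards_point_general
    (S : Finset (EuclideanSpace ℝ (Fin 2)))
    (D : EuclideanSpace ℝ (Fin 2)) (d : ℝ) (hd : 0 < d)
    (hdist : ∀ p ∈ S, d ≤ dist p D)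
    (c : EuclideanSpace ℝ (Fin 2)) (r : ℝ)
    (hc : ∀ p ∈ S, dist p c ≤ r) :
    ∃ c' : EuclideanSpace ℝ (Fin 2),
      ∀ p ∈ S, dist (p + (d / dist p D) • (D - p)) c' ≤ r := by
  refine ⟨D + ((c - D) - projClosedBall d (c - D)), fun p hp => ?_⟩
  have hmove : p + (d / dist p D) • (D - p) = D + ((p - D) - projClosedBall d (p - D)) := by
    rw [projClosedBall, max_eq_left (dist_eq_norm p D ▸ hdist p hp), ← dist_eq_norm]
    module
  calc dist (p + (d / dist p D) • (D - p)) (D + ((c - D) - projClosedBall d (c - D)))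
      ≤ ‖(p - D) - (c - D)‖ := by
        rw [hmove, dist_add_left, dist_eq_norm]
        exact norm_sub_projClosedBall_sub_le hd _ _
    _ = dist p c := by rw [sub_sub_sub_cancel_right, dist_eq_norm]
    _ ≤ r := hc p hp
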